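/- arXiv:1701.04964 — 2 statements merged into one kernel-verified Lean document; each statement's English description precedes it below -/
import Mathlib

section
/- Let n ≥ 3 be an integer, m > 0, and ψ(x) = (2/(n−2))·log(1 + (m/2)‖x‖^(2−n)) on EuclideanSpace ℝ (Fin n) ∖ {0}. Then for every x ≠ 0 and every unit vector ν, (n−1)/‖x‖ + ⟨∇ψ(x), ν⟩ > 0. -/
/-!
The conformal factor is radial, `ψ x = φ ‖x‖`, so `∇ψ(x) = φ'(r) • x / r` with
`φ'(r) = -m r^(1-n) / (1 + (m/2) r^(2-n)) ≤ 0`. By Cauchy–Schwarz the worst direction is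
`ν = x / r`, where the claim `(n-1)/r + φ'(r) > 0` becomes, with `u = r^(2-n)`,
`m u < (n-1)(1 + m u / 2)`; this holds because `n - 1 ≥ 2`.
-/

open scoped RealInnerProductSpace

open Real

section Radial

variable {E : Type*} [NormedAddCommGroup E] [InnerProductSpace ℝ E] {x : E}

theorem hasFDerivAt_norm (hx : x ≠ 0) :
    HasFDerivAt (fun y : E => ‖y‖) (‖x‖⁻¹ • innerSL ℝ x) x := by
  have hsq : HasFDerivAt (fun y : E => √(‖y‖ ^ 2)) _ x :=
    (hasStrictFDerivAt_norm_sq x).hasFDerivAt.sqrt (by positivity)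
  simp only [sqrt_sq (norm_nonneg _)] at hsq
  convert hsq using 1
  ext y
  simp only [smul_apply, innerSL_apply_apply, smul_eq_mul, nsmul_eq_mul]
  ring

theorem HasDerivAt.hasGradientAt_comp_norm [CompleteSpace E] {f : ℝ → ℝ} {f' : ℝ}
    (hf : HasDerivAt f f' ‖x‖) (hx : x ≠ 0) :
    HasGradientAt (fun y => f ‖y‖) ((f' / ‖x‖) • x) x := by
  rw [hasGradientAt_iff_hasFDerivAt]
  refine (hf.comp_hasFDerivAt x (hasFDerivAt_norm hx)).congr_fderiv ?_
  ext y
  simp only [InnerProductSpace.toDual_apply_apply, smul_apply,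
    innerSL_apply_apply, real_inner_smul_left, smul_eq_mul]
  ring

end Radial

noncomputable def schwarzschildProfile (d m r : ℝ) : ℝ :=
  2 / (d - 2) * log (1 + m / 2 * r ^ (2 - d))

theorem hasDerivAt_schwarzschildProfile {d m r : ℝ} (hd : d ≠ 2) (hr : 0 < r)
    (hD : 1 + m / 2 * r ^ (2 - d) ≠ 0) :
    HasDerivAt (schwarzschildProfile d m) (-(m * r ^ (1 - d) / (1 + m / 2 * r ^ (2 - d)))) r := by
  have hpow := hasDerivAt_rpow_const (x := r) (p := 2 - d) (Or.inl hr.ne')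
  refine ((((hpow.const_mul (m / 2)).const_add 1).log hD).const_mul (2 / (d - 2))).congr_deriv ?_
  have hd' : d - 2 ≠ 0 := sub_ne_zero.mpr hd
  rw [show (2 : ℝ) - d - 1 = 1 - d by ring]
  field_simp
  ring

theorem mass_term_lt_sphere_mean_curvature {d m r : ℝ} (hd : 3 ≤ d) (hm : 0 ≤ m) (hr : 0 < r) :
    m * r ^ (1 - d) / (1 + m / 2 * r ^ (2 - d)) < (d - 1) / r := by
  have hu : 0 < r ^ (2 - d) := rpow_pos_of_pos hr _
  have hmu : 0 ≤ m * r ^ (2 - d) := mul_nonneg hm hu.le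
  have hsplit : r ^ (1 - d) * r = r ^ (2 - d) := by
    rw [← rpow_add_one hr.ne']; ring_nf
  rw [div_lt_div_iff₀ (by positivity) hr, mul_assoc, hsplit]
  nlinarith

/-- For `ψ(x) = (2/(n-2))·log(1 + (m/2)‖x‖^(2-n))`, every `x ≠ 0` and every unit vector `ν`
satisfy `(n-1)/‖x‖ + ⟨∇ψ(x), ν⟩ > 0`: every Euclidean sphere has positive mean curvature
with respect to the Schwarzschild metric. -/
theorem schwarzschild_sphere_mean_curvature_positive
    (n : ℕ) (hn : 3 ≤ n) (m : ℝ) (hm : 0 < m)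
    (ψ : EuclideanSpace ℝ (Fin n) → ℝ)
    (hψ : ∀ x, ψ x = (2 / ((n : ℝ) - 2)) * Real.log (1 + (m / 2) * ‖x‖ ^ ((2 : ℝ) - (n : ℝ)))) :
    ∀ x : EuclideanSpace ℝ (Fin n), x ≠ 0 → ∀ ν : EuclideanSpace ℝ (Fin n), ‖ν‖ = 1 →
      0 < ((n : ℝ) - 1) / ‖x‖ + ⟪gradient ψ x, ν⟫ := by
  intro x hx ν hν
  have hn' : (3 : ℝ) ≤ n := by exact_mod_cast hn
  have hr : 0 < ‖x‖ := norm_pos_iff.mpr hx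
  have hD : 0 < 1 + m / 2 * ‖x‖ ^ (2 - (n : ℝ)) := by
    have := rpow_pos_of_pos hr (2 - (n : ℝ)); positivity
  set s := m * ‖x‖ ^ (1 - (n : ℝ)) / (1 + m / 2 * ‖x‖ ^ (2 - (n : ℝ)))
  have hs : 0 ≤ s := by have := rpow_pos_of_pos hr (1 - (n : ℝ)); positivity
  have hgrad : gradient ψ x = (-s / ‖x‖) • x := by
    rw [show ψ = fun y => schwarzschildProfile n m ‖y‖ from funext hψ]
    exact ((hasDerivAt_schwarzschildProfile (by linarith) hr hD.ne').hasGradientAt_comp_norm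
      hx).gradient
  have hinner : -s ≤ ⟪gradient ψ x, ν⟫ := by
    rw [hgrad, real_inner_smul_left]
    calc -s = -s / ‖x‖ * ‖x‖ := by field_simp
      _ ≤ -s / ‖x‖ * ⟪x, ν⟫ := by
        refine mul_le_mul_of_nonpos_left ?_ (div_nonpos_of_nonpos_of_nonneg (by linarith) hr.le)
        simpa [hν] using real_inner_le_norm x ν
  linarith [mass_term_lt_sphere_mean_curvature hn' hm.le hr]
end

section
/- Let n ≥ 3 be an integer, c ∈ ℝ, a₀ > 0, and set α = (n−2)/(n−1). Let b : [0,∞) → ℝ be continuous and satisfy b(t) − b(t̄) ≤ α·∫_{t̄}^{t} (b(τ) + c) dτ for all 0 ≤ t̄ ≤ t. Then the function Q(t) = (a₀·e^t)^{−(n−2)/(n−1)}·(b(t) + c) is non-increasing on [0,∞). -/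
open Real Set intervalIntegral

/-!
With `g = b + c`, the hypothesis reads `g(t) - g(t₁) ≤ α ∫_{t₁}^{t} g`, an integral form of
`g' ≤ α g`. The Gronwall argument shows that `e^{-αt} g(t)` is non-increasing, and
`(a₀ e^t)^{-α} = a₀^{-α} e^{-αt}` turns this into the monotonicity of `Q`.
-/

lemma mul_exp_rpow {a : ℝ} (ha : 0 ≤ a) (t y : ℝ) :
    (a * exp t) ^ y = a ^ y * exp (y * t) := by
  rw [mul_rpow ha (exp_pos t).le, ← exp_mul, mul_comm t]

lemma hasDerivAt_integral_of_mem_Ioo {g : ℝ → ℝ} {s t x : ℝ} (hg : ContinuousOn g (Icc s t))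
    (hx : x ∈ Ioo s t) : HasDerivAt (fun u => ∫ τ in s..u, g τ) (g x) x :=
  integral_hasDerivAt_right
    ((hg.mono (Icc_subset_Icc_right hx.2.le)).intervalIntegrable_of_Icc hx.1.le)
    ((hg.mono Ioo_subset_Icc_self).stronglyMeasurableAtFilter isOpen_Ioo x hx)
    (hg.continuousAt (Icc_mem_nhds hx.1 hx.2))

theorem exp_neg_mul_le_of_sub_le_mul_integral {g : ℝ → ℝ} {α s t : ℝ} (hα : 0 ≤ α)
    (hst : s ≤ t) (hg : ContinuousOn g (Icc s t))
    (h : ∀ x ∈ Icc s t, g x - g s ≤ α * ∫ τ in s..x, g τ) :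
    exp (-α * t) * g t ≤ exp (-α * s) * g s := by
  set B : ℝ → ℝ := fun x => ∫ τ in s..x, g τ
  -- `e^{-αx}` times the integral majorant of `g`; its derivative is `α e^{-αx}(g - g s - α B) ≤ 0`.
  set φ : ℝ → ℝ := fun x => exp (-α * x) * (g s + α * B x)
  have hφ_cont : ContinuousOn φ (Icc s t) := by
    have hB : ContinuousOn B (Icc s t) := by
      simpa only [uIcc_of_le hst] using
        continuousOn_primitive_interval' (hg.intervalIntegrable_of_Icc hst) left_mem_uIcc
    fun_prop
  set φ' : ℝ → ℝ := fun x => exp (-α * x) * (-α) * (g s + α * B x) + exp (-α * x) * (α * g x)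
  have hφ_deriv : ∀ x ∈ Ioo s t, HasDerivAt φ (φ' x) x := by
    intro x hx
    have hexp : HasDerivAt (fun u => exp (-α * u)) (exp (-α * x) * (-α)) x := by
      simpa using ((hasDerivAt_id x).const_mul (-α)).exp
    exact hexp.mul (((hasDerivAt_integral_of_mem_Ioo hg hx).const_mul α).const_add (g s))
  have hφ_anti : AntitoneOn φ (Icc s t) := by
    refine antitoneOn_of_hasDerivWithinAt_nonpos (f' := φ') (convex_Icc s t) hφ_cont
      (fun x hx => ?_) (fun x hx => ?_) <;> rw [interior_Icc] at hx
    · exact (hφ_deriv x hx).hasDerivWithinAt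
    · have hx' := h x (Ioo_subset_Icc_self hx)
      have : 0 ≤ exp (-α * x) * α * (g s + α * B x - g x) :=
        mul_nonneg (mul_nonneg (exp_pos _).le hα) (by linarith)
      linarith
  have hφ_left : φ s = exp (-α * s) * g s := by simp [φ, B]
  have hφ_right : exp (-α * t) * g t ≤ φ t := by
    have ht := h t (right_mem_Icc.mpr hst)
    exact mul_le_mul_of_nonneg_left (by linarith) (exp_pos _).le
  calc exp (-α * t) * g t ≤ φ t := hφ_right
    _ ≤ φ s := hφ_anti (left_mem_Icc.mpr hst) (right_mem_Icc.mpr hst) hst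
    _ = exp (-α * s) * g s := hφ_left

/-- Abstract form of the monotonicity of `Q(t)`: if `b` is continuous on `[0,∞)` and satisfies
`b(t) - b(t₁) ≤ ((n-2)/(n-1))·∫_{t₁}^{t} (b(τ) + c) dτ` for `0 ≤ t₁ ≤ t`, then with `a₀ > 0`
the function `Q(t) = (a₀e^t)^{-(n-2)/(n-1)}·(b(t) + c)` is non-increasing on `[0,∞)`. -/
theorem Q_monotone_nonincreasing (n : ℕ) (hn : 3 ≤ n) (c : ℝ) (a₀ : ℝ) (ha₀ : 0 < a₀)
    (α : ℝ) (hα : α = ((n : ℝ) - 2) / ((n : ℝ) - 1)) (b : ℝ → ℝ)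
    (hb : ContinuousOn b (Set.Ici (0 : ℝ)))
    (hineq : ∀ t₁ t₂ : ℝ, 0 ≤ t₁ → t₁ ≤ t₂ → b t₂ - b t₁ ≤ α * ∫ τ in t₁..t₂, (b τ + c)) :
    AntitoneOn
      (fun t : ℝ => (a₀ * Real.exp t) ^ (-(((n : ℝ) - 2) / ((n : ℝ) - 1))) * (b t + c))
      (Set.Ici (0 : ℝ)) := by
  have hn' : (3 : ℝ) ≤ n := by exact_mod_cast hn
  have hα_nonneg : 0 ≤ α := by rw [hα]; apply div_nonneg <;> linarith
  intro t₁ ht₁ t₂ _ ht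
  have hdecay : exp (-α * t₂) * (b t₂ + c) ≤ exp (-α * t₁) * (b t₁ + c) :=
    exp_neg_mul_le_of_sub_le_mul_integral (g := fun τ => b τ + c) hα_nonneg ht
      ((hb.mono (Icc_subset_Ici_self.trans (Ici_subset_Ici.mpr ht₁))).add continuousOn_const)
      (fun x hx => by linarith [hineq t₁ x ht₁ hx.1])
  simp only [← hα, mul_exp_rpow ha₀.le, mul_assoc]
  exact mul_le_mul_of_nonneg_left hdecay (rpow_nonneg ha₀.le _)
end
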